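/- arXiv:2307.02319 — 6 statements merged into one kernel-verified Lean document; each statement's English description precedes it below -/
import Mathlib

section
/- (Proposition 1.) For every ε > 0 there exist a reward r > 0 and a classifier δ ∈ [0,1]² such that EU_D(δ | r) > max{A₁, A₀, B₁, B₀} − ε. Moreover, for every reward r ∈ ℝ and every classifier δ ∈ [0,1]², EU_D(δ | r) ≤ max{A₁, A₀, B₁, B₀}, so this is the designer's highest attainable payoff. -/
open MeasureTheory

/-- A cost distribution: a CDF `F` with continuously differentiable structure
given by a strictly positive, differentiable, log-concave density `f` with full
support on `ℝ`. -/
structure CostDist where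
  F : ℝ → ℝ
  f : ℝ → ℝ
  deriv_eq : ∀ x : ℝ, HasDerivAt F (f x) x
  f_pos : ∀ x : ℝ, 0 < f x
  f_diff : Differentiable ℝ f
  f_logConcave : ConcaveOn ℝ Set.univ fun x => Real.log (f x)
  tendsto_bot : Filter.Tendsto F Filter.atBot (nhds 0)
  tendsto_top : Filter.Tendsto F Filter.atTop (nhds 1)

lemma F_mono (D : CostDist) : Monotone D.F := by
  have : StrictMono D.F := by
    apply strictMono_of_deriv_pos
    intro x
    rw [(D.deriv_eq x).deriv]
    exact D.f_pos x
  exact this.monotone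

lemma F_nonneg (D : CostDist) (x : ℝ) : 0 ≤ D.F x :=
  le_of_tendsto D.tendsto_bot (Filter.eventually_atBot.2 ⟨x, fun y hy => F_mono D hy⟩)

lemma F_le_one (D : CostDist) (x : ℝ) : D.F x ≤ 1 :=
  ge_of_tendsto D.tendsto_top (Filter.eventually_atTop.2 ⟨x, fun y hy => F_mono D hy⟩)

lemma exists_F_gt (D : CostDist) (c : ℝ) (hc : c < 1) : ∃ x > 0, c < D.F x := by
  have h1 := D.tendsto_top.eventually (eventually_gt_nhds hc)
  have h2 : ∀ᶠ x in Filter.atTop, (0:ℝ) < x := Filter.eventually_gt_atTop 0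
  obtain ⟨x, hx1, hx2⟩ := (h2.and h1).exists
  exact ⟨x, hx1, hx2⟩

lemma exists_F_lt (D : CostDist) (c : ℝ) (hc : 0 < c) : ∃ x < 0, D.F x < c := by
  have h1 := D.tendsto_bot.eventually (eventually_lt_nhds hc)
  have h2 : ∀ᶠ x in Filter.atBot, x < (0:ℝ) := Filter.eventually_lt_atBot 0
  obtain ⟨x, hx1, hx2⟩ := (h2.and h1).exists
  exact ⟨x, hx1, hx2⟩

lemma key_bound (ε M η q W W' : ℝ) (hε : 0 < ε) (hM : 0 ≤ M) (hη0 : 0 < η) (hη1 : η ≤ 1)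
    (hη2 : η * (2*M+1) ≤ ε) (hq : 1 - η ≤ q) (hq1 : q ≤ 1)
    (hW : (1-η)*M ≤ W) (hW0 : 0 ≤ W) (hW' : 0 ≤ W') :
    M - ε < q*W + (1-q)*W' := by
  nlinarith [mul_nonneg (sub_nonneg.2 hq1) hW', mul_nonneg (sub_nonneg.2 hq) hW0,
    mul_nonneg (sub_nonneg.2 hη1) (sub_nonneg.2 hW),
    mul_nonneg (mul_nonneg hη0.le hη0.le) hM]

lemma comb_le (t a b M : ℝ) (h0 : 0 ≤ t) (h1 : t ≤ 1) (ha : a ≤ M) (hb : b ≤ M) :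
    t*a + (1-t)*b ≤ M := by nlinarith

lemma comb_le' (t a b M : ℝ) (h0 : 0 ≤ t) (h1 : t ≤ 1) (ha : a ≤ M) (hb : b ≤ M) :
    a*t + b*(1-t) ≤ M := by nlinarith

lemma comb_nonneg (t a b : ℝ) (h0 : 0 ≤ t) (h1 : t ≤ 1) (ha : 0 ≤ a) (hb : 0 ≤ b) :
    0 ≤ t*a + (1-t)*b := by nlinarith

lemma comb_nonneg' (t a b : ℝ) (h0 : 0 ≤ t) (h1 : t ≤ 1) (ha : 0 ≤ a) (hb : 0 ≤ b) :
    0 ≤ a*t + b*(1-t) := by nlinarith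

/-- Expected responsiveness of the classifier `δ = (δ₁, δ₀)` at precision `φ`. -/
noncomputable def rho (d1 d0 phi : ℝ) : ℝ := (d1 + d0 - 1) * (2 * phi - 1)

/-- The designer's expected payoff `EU_D(δ | r)`. -/
noncomputable def EUD (D : CostDist) (phi A1 A0 B1 B0 r d1 d0 : ℝ) : ℝ :=
  D.F (r * rho d1 d0 phi) *
      (phi * (A1 * d1 + A0 * (1 - d1)) + (1 - phi) * (A0 * d0 + A1 * (1 - d0))) +
    (1 - D.F (r * rho d1 d0 phi)) *
      (phi * (B1 * d0 + B0 * (1 - d0)) + (1 - phi) * (B0 * d1 + B1 * (1 - d1)))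

/-- A voter's expected payoff conditional on complying, `EU₁(r | γ)`. -/
noncomputable def EU1 (D : CostDist) (phi t gamma d1 d0 r : ℝ) : ℝ :=
  -gamma + r * rho d1 d0 phi * (1 - D.F (r * rho d1 d0 phi)) + t * D.F (r * rho d1 d0 phi)

/-- A voter's expected payoff conditional on not complying, `EU₀(r)`. -/
noncomputable def EU0 (D : CostDist) (phi t d1 d0 r : ℝ) : ℝ :=
  -(r * rho d1 d0 phi) * D.F (r * rho d1 d0 phi) + t * D.F (r * rho d1 d0 phi)

/-- A voter's overall payoff `V(r | γ) = max(EU₁(r | γ), EU₀(r))`. -/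
noncomputable def V (D : CostDist) (phi t gamma d1 d0 r : ℝ) : ℝ :=
  max (EU1 D phi t gamma d1 d0 r) (EU0 D phi t d1 d0 r)

/-- Strict quasiconcavity of a real function on a set. -/
def StrictQuasiconcaveOn (s : Set ℝ) (g : ℝ → ℝ) : Prop :=
  ∀ ⦃x⦄, x ∈ s → ∀ ⦃y⦄, y ∈ s → x ≠ y → ∀ ⦃a b : ℝ⦄, 0 < a → 0 < b → a + b = 1 →
    min (g x) (g y) < g (a * x + b * y)

/-- Strict quasiconvexity of a real function on a set. -/
def StrictQuasiconvexOn (s : Set ℝ) (g : ℝ → ℝ) : Prop :=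
  ∀ ⦃x⦄, x ∈ s → ∀ ⦃y⦄, y ∈ s → x ≠ y → ∀ ⦃a b : ℝ⦄, 0 < a → 0 < b → a + b = 1 →
    g (a * x + b * y) < max (g x) (g y)

/-- `(r, δ)` is an equilibrium: `r` maximizes the median voter's payoff given `δ`,
and `δ ∈ [0,1]²` maximizes the designer's payoff given `r`. -/
def IsEquilibrium (D : CostDist) (phi t A1 A0 B1 B0 gammaMu r d1 d0 : ℝ) : Prop :=
  d1 ∈ Set.Icc (0 : ℝ) 1 ∧ d0 ∈ Set.Icc (0 : ℝ) 1 ∧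
  (∀ r' : ℝ, V D phi t gammaMu d1 d0 r' ≤ V D phi t gammaMu d1 d0 r) ∧
  (∀ e1 ∈ Set.Icc (0 : ℝ) 1, ∀ e0 ∈ Set.Icc (0 : ℝ) 1,
    EUD D phi A1 A0 B1 B0 r e1 e0 ≤ EUD D phi A1 A0 B1 B0 r d1 d0)

set_option maxHeartbeats 1000000

/-- **Proposition 1.** For every `ε > 0` there exist a reward `r > 0` and a classifier
`δ ∈ [0,1]²` such that `EU_D(δ | r) > max {A₁, A₀, B₁, B₀} − ε`; moreover
`EU_D(δ | r) ≤ max {A₁, A₀, B₁, B₀}` always, so this is the designer's highest payoff. -/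
theorem prop1 (D : CostDist) (phi : ℝ) (hphi : phi ∈ Set.Ioc (1 / 2 : ℝ) 1)
    (A1 A0 B1 B0 : ℝ) (hA1 : 0 ≤ A1) (hA0 : 0 ≤ A0) (hB1 : 0 ≤ B1) (hB0 : 0 ≤ B0) :
    (∀ ε > (0 : ℝ), ∃ r > (0 : ℝ), ∃ d1 ∈ Set.Icc (0 : ℝ) 1, ∃ d0 ∈ Set.Icc (0 : ℝ) 1,
      max (max A1 A0) (max B1 B0) - ε < EUD D phi A1 A0 B1 B0 r d1 d0) ∧
    (∀ r : ℝ, ∀ d1 ∈ Set.Icc (0 : ℝ) 1, ∀ d0 ∈ Set.Icc (0 : ℝ) 1,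
      EUD D phi A1 A0 B1 B0 r d1 d0 ≤ max (max A1 A0) (max B1 B0)) := by
  obtain ⟨hphi1, hphi2⟩ := hphi
  have hphi0 : (0:ℝ) ≤ phi := by linarith
  have h2phi : (0:ℝ) < 2 * phi - 1 := by linarith
  have h1phi : (0:ℝ) ≤ 1 - phi := by linarith
  set M := max (max A1 A0) (max B1 B0) with hM
  have hA1M : A1 ≤ M := le_trans (le_max_left _ _) (le_max_left _ _)
  have hA0M : A0 ≤ M := le_trans (le_max_right _ _) (le_max_left _ _)
  have hB1M : B1 ≤ M := le_trans (le_max_left _ _) (le_max_right _ _)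
  have hB0M : B0 ≤ M := le_trans (le_max_right _ _) (le_max_right _ _)
  have hM0 : 0 ≤ M := le_trans hA1 hA1M
  constructor
  · -- attainability
    intro ε hε
    set η : ℝ := min 1 (ε / (2*M+1)) with hηdef
    have h2M1 : (0:ℝ) < 2*M+1 := by linarith
    have hη0 : 0 < η := lt_min one_pos (div_pos hε h2M1)
    have hη1 : η ≤ 1 := min_le_left _ _
    have hη2 : η * (2*M+1) ≤ ε := by
      have := min_le_right 1 (ε / (2*M+1))
      calc η * (2*M+1) ≤ (ε / (2*M+1)) * (2*M+1) := by
            apply mul_le_mul_of_nonneg_right this h2M1.le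
        _ = ε := by field_simp
    have hηIcc : η ∈ Set.Icc (0:ℝ) 1 := ⟨hη0.le, hη1⟩
    have h1ηIcc : 1 - η ∈ Set.Icc (0:ℝ) 1 := ⟨by linarith, by linarith⟩
    have hcases : M = A1 ∨ M = A0 ∨ M = B1 ∨ M = B0 := by
      rcases max_choice (max A1 A0) (max B1 B0) with h | h <;>
        rcases max_choice A1 A0 with h1 | h1 <;>
        rcases max_choice B1 B0 with h2 | h2 <;> rw [hM, h] <;> tauto
    have hne : η * (2 * phi - 1) ≠ 0 := by positivity
    rcases hcases with hMe | hMe | hMe | hMe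
    · -- M = A1 : d1 = 1, d0 = η, π → 1
      obtain ⟨x, hx0, hxF⟩ := exists_F_gt D (1 - η) (by linarith)
      refine ⟨x / (η * (2 * phi - 1)), by positivity, 1, ⟨zero_le_one, le_refl 1⟩, η, hηIcc, ?_⟩
      have hrr : (x / (η * (2 * phi - 1))) * rho 1 η phi = x := by
        rw [rho]; field_simp; try ring
      have hq1 : D.F x ≤ 1 := F_le_one D x
      have hW : (1-η)*M ≤ phi * (A1 * 1 + A0 * (1 - 1)) + (1 - phi) * (A0 * η + A1 * (1 - η)) := by
        rw [hMe]
        nlinarith [mul_nonneg (mul_nonneg hphi0 hη0.le) hA1,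
          mul_nonneg (mul_nonneg h1phi hη0.le) hA0]
      have hW0 : 0 ≤ phi * (A1 * 1 + A0 * (1 - 1)) + (1 - phi) * (A0 * η + A1 * (1 - η)) := by
        linarith [hW, mul_nonneg (by linarith : (0:ℝ) ≤ 1 - η) hM0]
      have hW' : 0 ≤ phi * (B1 * η + B0 * (1 - η)) + (1 - phi) * (B0 * 1 + B1 * (1 - 1)) := by
        apply comb_nonneg _ _ _ hphi0 hphi2 <;> nlinarith
      calc M - ε < D.F x * (phi * (A1 * 1 + A0 * (1 - 1)) + (1 - phi) * (A0 * η + A1 * (1 - η)))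
            + (1 - D.F x) * (phi * (B1 * η + B0 * (1 - η)) + (1 - phi) * (B0 * 1 + B1 * (1 - 1))) :=
            key_bound ε M η (D.F x) _ _ hε hM0 hη0 hη1 hη2 (le_of_lt hxF) hq1 hW hW0 hW'
        _ = EUD D phi A1 A0 B1 B0 (x / (η * (2 * phi - 1))) 1 η := by rw [EUD, hrr]
    · -- M = A0 : d1 = η, d0 = 1, π → 1
      obtain ⟨x, hx0, hxF⟩ := exists_F_gt D (1 - η) (by linarith)
      refine ⟨x / (η * (2 * phi - 1)), by positivity, η, hηIcc, 1, ⟨zero_le_one, le_refl 1⟩, ?_⟩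
      have hrr : (x / (η * (2 * phi - 1))) * rho η 1 phi = x := by
        rw [rho]; field_simp; try ring
      have hq1 : D.F x ≤ 1 := F_le_one D x
      have hW : (1-η)*M ≤ phi * (A1 * η + A0 * (1 - η)) + (1 - phi) * (A0 * 1 + A1 * (1 - 1)) := by
        rw [hMe]
        nlinarith [mul_nonneg (mul_nonneg hphi0 hη0.le) hA1,
          mul_nonneg (mul_nonneg h1phi hη0.le) hA0]
      have hW0 : 0 ≤ phi * (A1 * η + A0 * (1 - η)) + (1 - phi) * (A0 * 1 + A1 * (1 - 1)) := by
        linarith [hW, mul_nonneg (by linarith : (0:ℝ) ≤ 1 - η) hM0]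
      have hW' : 0 ≤ phi * (B1 * 1 + B0 * (1 - 1)) + (1 - phi) * (B0 * η + B1 * (1 - η)) := by
        apply comb_nonneg _ _ _ hphi0 hphi2 <;> nlinarith
      calc M - ε < D.F x * (phi * (A1 * η + A0 * (1 - η)) + (1 - phi) * (A0 * 1 + A1 * (1 - 1)))
            + (1 - D.F x) * (phi * (B1 * 1 + B0 * (1 - 1)) + (1 - phi) * (B0 * η + B1 * (1 - η))) :=
            key_bound ε M η (D.F x) _ _ hε hM0 hη0 hη1 hη2 (le_of_lt hxF) hq1 hW hW0 hW'
        _ = EUD D phi A1 A0 B1 B0 (x / (η * (2 * phi - 1))) η 1 := by rw [EUD, hrr]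
    · -- M = B1 : d1 = 0, d0 = 1 - η, π → 0
      obtain ⟨y, hy0, hyF⟩ := exists_F_lt D η hη0
      refine ⟨-y / (η * (2 * phi - 1)), div_pos (by linarith) (by positivity), 0, ⟨le_refl 0, zero_le_one⟩, 1 - η, h1ηIcc, ?_⟩
      have hrr : (-y / (η * (2 * phi - 1))) * rho 0 (1 - η) phi = y := by
        rw [rho]; field_simp; try ring
      have hFy0 : 0 ≤ D.F y := F_nonneg D y
      have hq : 1 - η ≤ 1 - D.F y := by linarith
      have hq1 : 1 - D.F y ≤ 1 := by linarith
      have hW : (1-η)*M ≤ phi * (B1 * (1 - η) + B0 * (1 - (1 - η))) + (1 - phi) * (B0 * 0 + B1 * (1 - 0)) := by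
        rw [hMe]
        nlinarith [mul_nonneg (mul_nonneg hphi0 hη0.le) hB0,
          mul_nonneg (mul_nonneg hphi0 hη0.le) hB1]
      have hW0 : 0 ≤ phi * (B1 * (1 - η) + B0 * (1 - (1 - η))) + (1 - phi) * (B0 * 0 + B1 * (1 - 0)) := by
        linarith [hW, mul_nonneg (by linarith : (0:ℝ) ≤ 1 - η) hM0]
      have hW' : 0 ≤ phi * (A1 * 0 + A0 * (1 - 0)) + (1 - phi) * (A0 * (1 - η) + A1 * (1 - (1 - η))) := by
        apply comb_nonneg _ _ _ hphi0 hphi2 <;> nlinarith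
      calc M - ε < (1 - D.F y) * (phi * (B1 * (1 - η) + B0 * (1 - (1 - η))) + (1 - phi) * (B0 * 0 + B1 * (1 - 0)))
            + (1 - (1 - D.F y)) * (phi * (A1 * 0 + A0 * (1 - 0)) + (1 - phi) * (A0 * (1 - η) + A1 * (1 - (1 - η)))) :=
            key_bound ε M η (1 - D.F y) _ _ hε hM0 hη0 hη1 hη2 hq hq1 hW hW0 hW'
        _ = EUD D phi A1 A0 B1 B0 (-y / (η * (2 * phi - 1))) 0 (1 - η) := by rw [EUD, hrr]; ring
    · -- M = B0 : d1 = 1 - η, d0 = 0, π → 0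
      obtain ⟨y, hy0, hyF⟩ := exists_F_lt D η hη0
      refine ⟨-y / (η * (2 * phi - 1)), div_pos (by linarith) (by positivity), 1 - η, h1ηIcc, 0, ⟨le_refl 0, zero_le_one⟩, ?_⟩
      have hrr : (-y / (η * (2 * phi - 1))) * rho (1 - η) 0 phi = y := by
        rw [rho]; field_simp; try ring
      have hFy0 : 0 ≤ D.F y := F_nonneg D y
      have hq : 1 - η ≤ 1 - D.F y := by linarith
      have hq1 : 1 - D.F y ≤ 1 := by linarith
      have hW : (1-η)*M ≤ phi * (B1 * 0 + B0 * (1 - 0)) + (1 - phi) * (B0 * (1 - η) + B1 * (1 - (1 - η))) := by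
        rw [hMe]
        nlinarith [mul_nonneg (mul_nonneg h1phi hη0.le) hB0,
          mul_nonneg (mul_nonneg h1phi hη0.le) hB1]
      have hW0 : 0 ≤ phi * (B1 * 0 + B0 * (1 - 0)) + (1 - phi) * (B0 * (1 - η) + B1 * (1 - (1 - η))) := by
        linarith [hW, mul_nonneg (by linarith : (0:ℝ) ≤ 1 - η) hM0]
      have hW' : 0 ≤ phi * (A1 * (1 - η) + A0 * (1 - (1 - η))) + (1 - phi) * (A0 * 0 + A1 * (1 - 0)) := by
        apply comb_nonneg _ _ _ hphi0 hphi2 <;> nlinarith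
      calc M - ε < (1 - D.F y) * (phi * (B1 * 0 + B0 * (1 - 0)) + (1 - phi) * (B0 * (1 - η) + B1 * (1 - (1 - η))))
            + (1 - (1 - D.F y)) * (phi * (A1 * (1 - η) + A0 * (1 - (1 - η))) + (1 - phi) * (A0 * 0 + A1 * (1 - 0))) :=
            key_bound ε M η (1 - D.F y) _ _ hε hM0 hη0 hη1 hη2 hq hq1 hW hW0 hW'
        _ = EUD D phi A1 A0 B1 B0 (-y / (η * (2 * phi - 1))) (1 - η) 0 := by rw [EUD, hrr]; ring
  · -- upper bound
    intro r d1 hd1 d0 hd0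
    rw [EUD]
    apply comb_le _ _ _ _ (F_nonneg D _) (F_le_one D _)
    · exact comb_le _ _ _ _ hphi0 hphi2
        (comb_le' _ _ _ _ hd1.1 hd1.2 hA1M hA0M) (comb_le' _ _ _ _ hd0.1 hd0.2 hA0M hA1M)
    · exact comb_le _ _ _ _ hphi0 hphi2
        (comb_le' _ _ _ _ hd0.1 hd0.2 hB1M hB0M) (comb_le' _ _ _ _ hd1.1 hd1.2 hB0M hB1M)
end

section
/- (Proposition 2.) Suppose the designer's payoffs satisfy A₁ = A₀ = Ā ≥ 0 and B₁ = B₀ = B̄ ≥ 0. If r·(Ā − B̄) > 0 then δ = (1,1) maximizes EU_D(· | r) over [0,1]²; if r·(Ā − B̄) < 0 then δ = (0,0) maximizes EU_D(· | r) over [0,1]²; and if r = 0 or Ā = B̄ then EU_D(· | r) is constant on [0,1]². -/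
open MeasureTheory

lemma CostDist.mono (D : CostDist) : StrictMono D.F :=
  strictMono_of_deriv_pos fun x => by
    rw [(D.deriv_eq x).deriv]; exact D.f_pos x

lemma EUD_eq (D : CostDist) (phi A B r d1 d0 : ℝ) :
    EUD D phi A A B B r d1 d0 = B + D.F (r * rho d1 d0 phi) * (A - B) := by
  unfold EUD; ring

/-- **Proposition 2.** If `A₁ = A₀ = Ā ≥ 0` and `B₁ = B₀ = B̄ ≥ 0`, then
`δ = (1,1)` is optimal when `r·(Ā − B̄) > 0`, `δ = (0,0)` is optimal when
`r·(Ā − B̄) < 0`, and all classifiers are equivalent when `r = 0` or `Ā = B̄`. -/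
theorem prop2 (D : CostDist) (phi : ℝ) (hphi : phi ∈ Set.Ioc (1 / 2 : ℝ) 1)
    (Abar Bbar r : ℝ) (hA : 0 ≤ Abar) (hB : 0 ≤ Bbar) :
    (0 < r * (Abar - Bbar) →
      ∀ d1 ∈ Set.Icc (0 : ℝ) 1, ∀ d0 ∈ Set.Icc (0 : ℝ) 1,
        EUD D phi Abar Abar Bbar Bbar r d1 d0 ≤ EUD D phi Abar Abar Bbar Bbar r 1 1) ∧
    (r * (Abar - Bbar) < 0 →
      ∀ d1 ∈ Set.Icc (0 : ℝ) 1, ∀ d0 ∈ Set.Icc (0 : ℝ) 1,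
        EUD D phi Abar Abar Bbar Bbar r d1 d0 ≤ EUD D phi Abar Abar Bbar Bbar r 0 0) ∧
    ((r = 0 ∨ Abar = Bbar) →
      ∀ d1 ∈ Set.Icc (0 : ℝ) 1, ∀ d0 ∈ Set.Icc (0 : ℝ) 1,
        ∀ e1 ∈ Set.Icc (0 : ℝ) 1, ∀ e0 ∈ Set.Icc (0 : ℝ) 1,
          EUD D phi Abar Abar Bbar Bbar r d1 d0 = EUD D phi Abar Abar Bbar Bbar r e1 e0) := by
  obtain ⟨hphi1, hphi2⟩ := hphi
  have h2 : 0 < 2 * phi - 1 := by linarith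
  have key : ∀ d1 ∈ Set.Icc (0:ℝ) 1, ∀ d0 ∈ Set.Icc (0:ℝ) 1,
      rho d1 d0 phi ∈ Set.Icc (-(2*phi-1)) (2*phi-1) := by
    intro d1 hd1 d0 hd0
    constructor
    · unfold rho; nlinarith [hd1.1, hd0.1]
    · unfold rho; nlinarith [hd1.2, hd0.2]
  have r11 : rho 1 1 phi = 2 * phi - 1 := by unfold rho; ring
  have r00 : rho 0 0 phi = -(2 * phi - 1) := by unfold rho; ring
  refine ⟨?_, ?_, ?_⟩
  · intro hr d1 hd1 d0 hd0
    rw [EUD_eq, EUD_eq, r11]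
    have hρ := key d1 hd1 d0 hd0
    rcases lt_trichotomy r 0 with h | h | h
    · have hAB : Abar - Bbar < 0 := by nlinarith
      have : D.F (r * (2*phi-1)) ≤ D.F (r * rho d1 d0 phi) :=
        D.mono.monotone (by nlinarith [hρ.2])
      nlinarith
    · simp [h] at hr
    · have hAB : 0 < Abar - Bbar := by nlinarith
      have : D.F (r * rho d1 d0 phi) ≤ D.F (r * (2*phi-1)) :=
        D.mono.monotone (by nlinarith [hρ.2])
      nlinarith
  · intro hr d1 hd1 d0 hd0
    rw [EUD_eq, EUD_eq, r00]
    have hρ := key d1 hd1 d0 hd0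
    rcases lt_trichotomy r 0 with h | h | h
    · have hAB : 0 < Abar - Bbar := by nlinarith
      have : D.F (r * rho d1 d0 phi) ≤ D.F (r * -(2*phi-1)) :=
        D.mono.monotone (by nlinarith [hρ.1])
      nlinarith
    · simp [h] at hr
    · have hAB : Abar - Bbar < 0 := by nlinarith
      have : D.F (r * -(2*phi-1)) ≤ D.F (r * rho d1 d0 phi) :=
        D.mono.monotone (by nlinarith [hρ.1])
      nlinarith
  · rintro (h | h) d1 _ d0 _ e1 _ e0 _
    · simp [EUD_eq, h]
    · simp [EUD_eq, h]
end

section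
/- (Proposition 5.) Fix a classifier δ ∈ [0,1]² and precision φ ∈ (1/2, 1]. If ρ(δ,φ) ≠ 0, then each of the maps r ↦ EU₁(r | γ) and r ↦ EU₀(r) is strictly quasiconcave on ℝ and attains its global maximum at a unique point r ∈ ℝ (an interior, i.e. finite, maximizer). If ρ(δ,φ) = 0 (δ is null), then both maps are constant in r, so every voter is indifferent between all reward levels. -/
/-!
Writing `x = r ρ`, we have `EU₀ = (t - x) F(x)` and `EU₁ = x (1 - F(x)) + t F(x) - γ`. The latter
is, up to a constant, `(-t - y) G(y)` at `y = -x`, where `G(y) = 1 - F(-y)` is the CDF of `-γ`,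
whose density is again log-concave. So everything reduces to showing that `x ↦ (t - x) F(x)` is
strictly increasing and then strictly decreasing, a shape preserved by `r ↦ r ρ` for `ρ ≠ 0` and
which gives both strict quasiconcavity and a unique maximizer.

The derivative of `(t - x) F(x)` is `f(x) (t - x - F(x) / f(x))`, so it suffices that `F / f` is
monotone. Log-concavity gives `f(u) f(x + h) ≤ f(x) f(u + h)` for `u ≤ x`, `h ≥ 0`; integrating
over `u ∈ [a, x]` and letting `a → -∞` yields `F(x) f(x + h) ≤ F(x + h) f(x)`.
-/

open MeasureTheory

open Set Filter Topology

theorem ConcaveOn.antitone_map_add_sub_map {L : ℝ → ℝ} (hL : ConcaveOn ℝ univ L) {h : ℝ}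
    (hh : 0 ≤ h) : Antitone fun x => L (x + h) - L x := by
  intro u x hux
  rcases hh.eq_or_lt with rfl | hh
  · simp
  rcases hux.eq_or_lt with rfl | hux
  · rfl
  have hx : slope L (x + h) x ≤ slope L (x + h) u :=
    hL.slope_anti (mem_univ _) ⟨mem_univ u, by simp; linarith⟩ ⟨mem_univ x, by simp; linarith⟩
      hux.le
  have hu : slope L u (x + h) ≤ slope L u (u + h) :=
    hL.slope_anti (mem_univ _) ⟨mem_univ _, by simp; linarith⟩ ⟨mem_univ _, by simp; linarith⟩
      (by linarith)
  have := (slope_comm L x (x + h)).trans_le (hx.trans ((slope_comm L _ _).trans_le hu))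
  simp only [slope_def_field, add_sub_cancel_left] at this
  exact (div_le_div_iff_of_pos_right hh).1 this

def StrictUnimodal (G : ℝ → ℝ) : Prop :=
  ∃ x₀, StrictMonoOn G (Iic x₀) ∧ StrictAntiOn G (Ici x₀)

namespace StrictUnimodal

variable {G : ℝ → ℝ}

theorem of_hasDerivAt {G' : ℝ → ℝ} {x₀ : ℝ} (hG : ∀ x, HasDerivAt G (G' x) x)
    (hpos : ∀ x < x₀, 0 < G' x) (hneg : ∀ x, x₀ < x → G' x < 0) : StrictUnimodal G := by
  have hcont : ContinuousOn G univ := fun x _ => (hG x).continuousAt.continuousWithinAt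
  refine ⟨x₀, strictMonoOn_of_hasDerivWithinAt_pos (convex_Iic x₀) (hcont.mono (subset_univ _))
    (fun x _ => (hG x).hasDerivWithinAt) ?_, strictAntiOn_of_hasDerivWithinAt_neg (convex_Ici x₀)
    (hcont.mono (subset_univ _)) (fun x _ => (hG x).hasDerivWithinAt) ?_⟩
  · simpa only [interior_Iic, mem_Iio] using hpos
  · simpa only [interior_Ici, mem_Ioi] using hneg

theorem add_const (hG : StrictUnimodal G) (k : ℝ) : StrictUnimodal fun x => G x + k := by
  obtain ⟨x₀, hmono, hanti⟩ := hG
  exact ⟨x₀, fun x hx y hy hxy => by simpa using hmono hx hy hxy,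
    fun x hx y hy hxy => by simpa using hanti hx hy hxy⟩

theorem comp_mul_right (hG : StrictUnimodal G) {c : ℝ} (hc : c ≠ 0) :
    StrictUnimodal fun r => G (r * c) := by
  obtain ⟨x₀, hmono, hanti⟩ := hG
  refine ⟨x₀ / c, ?_⟩
  rcases hc.lt_or_gt with hc | hc
  · have hmul : StrictAnti fun r => r * c := fun a b hab => mul_lt_mul_of_neg_right hab hc
    exact ⟨hanti.comp (hmul.strictAntiOn _) fun r hr => (le_div_iff_of_neg hc).1 hr,
      hmono.comp_strictAntiOn (hmul.strictAntiOn _) fun r hr => (div_le_iff_of_neg hc).1 hr⟩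
  · have hmul := strictMono_mul_right_of_pos hc
    exact ⟨hmono.comp (hmul.strictMonoOn _) fun r hr => (le_div_iff₀ hc).1 hr,
      hanti.comp_strictMonoOn (hmul.strictMonoOn _) fun r hr => (div_le_iff₀ hc).1 hr⟩

theorem min_lt {x y z : ℝ} (hG : StrictUnimodal G) (hxz : min x y < z) (hzy : z < max x y) :
    min (G x) (G y) < G z := by
  obtain ⟨x₀, hmono, hanti⟩ := hG
  rcases le_total z x₀ with hz | hz
  · calc min (G x) (G y) ≤ G (min x y) := by rcases min_choice x y with h | h <;> simp [h]
      _ < G z := hmono (mem_Iic.2 (hxz.le.trans hz)) hz hxz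
  · calc min (G x) (G y) ≤ G (max x y) := by rcases max_choice x y with h | h <;> simp [h]
      _ < G z := hanti hz (mem_Ici.2 (hz.trans hzy.le)) hzy

theorem strictQuasiconcaveOn (hG : StrictUnimodal G) : StrictQuasiconcaveOn univ G := by
  intro x _ y _ hxy a b ha hb hab
  have hz : a * x + b * y ∈ Ioo (min x y) (max x y) :=
    openSegment_eq_Ioo' (𝕜 := ℝ) hxy ▸ ⟨a, b, ha, hb, hab, rfl⟩
  exact hG.min_lt hz.1 hz.2

theorem existsUnique_forall_le (hG : StrictUnimodal G) : ∃! r, ∀ r', G r' ≤ G r := by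
  obtain ⟨x₀, hmono, hanti⟩ := hG
  have hlt : ∀ r, r ≠ x₀ → G r < G x₀ := by
    intro r hr
    rcases hr.lt_or_gt with hr | hr
    · exact hmono hr.le (mem_Iic.2 le_rfl) hr
    · exact hanti (mem_Ici.2 le_rfl) hr.le hr
  refine ⟨x₀, fun r => ?_, fun r hr => ?_⟩
  · rcases eq_or_ne r x₀ with rfl | hr
    exacts [le_rfl, (hlt r hr).le]
  · by_contra hne
    exact (hr x₀).not_gt (hlt r hne)

end StrictUnimodal

namespace CostDist

variable (D : CostDist)

theorem continuous_F : Continuous D.F :=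
  continuous_iff_continuousAt.2 fun x => (D.deriv_eq x).continuousAt

theorem F_nonneg (x : ℝ) : 0 ≤ D.F x :=
  le_of_tendsto D.tendsto_bot <| eventually_atBot.2
    ⟨x, fun _ ha => monotone_of_hasDerivAt_nonneg D.deriv_eq (fun y => (D.f_pos y).le) ha⟩

theorem integral_f (a b : ℝ) : ∫ u in a..b, D.f u = D.F b - D.F a :=
  intervalIntegral.integral_eq_sub_of_hasDerivAt (fun x _ => D.deriv_eq x)
    (D.f_diff.continuous.intervalIntegrable a b)

theorem f_mul_f_le {u x h : ℝ} (hux : u ≤ x) (hh : 0 ≤ h) :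
    D.f u * D.f (x + h) ≤ D.f x * D.f (u + h) := by
  have hlog := D.f_logConcave.antitone_map_add_sub_map hh hux
  rw [← Real.log_le_log_iff (mul_pos (D.f_pos _) (D.f_pos _)) (mul_pos (D.f_pos _) (D.f_pos _)),
    Real.log_mul (D.f_pos _).ne' (D.f_pos _).ne', Real.log_mul (D.f_pos _).ne' (D.f_pos _).ne']
  linarith

theorem F_mul_f_le (x : ℝ) {h : ℝ} (hh : 0 ≤ h) :
    D.F x * D.f (x + h) ≤ D.F (x + h) * D.f x := by
  have hcut : ∀ a ≤ x, D.F x * D.f (x + h) ≤ D.F (x + h) * D.f x + D.F a * D.f (x + h) := by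
    intro a ha
    have hint : ∫ u in a..x, D.f u * D.f (x + h) ≤ ∫ u in a..x, D.f x * D.f (u + h) :=
      intervalIntegral.integral_mono_on ha
        ((D.f_diff.continuous.mul continuous_const).intervalIntegrable a x)
        ((continuous_const.mul (D.f_diff.continuous.comp (continuous_add_const h))).intervalIntegrable
          a x)
        fun u hu => D.f_mul_f_le hu.2 hh
    rw [intervalIntegral.integral_mul_const, intervalIntegral.integral_const_mul,
      intervalIntegral.integral_comp_add_right, D.integral_f, D.integral_f] at hint
    nlinarith [mul_nonneg (D.f_pos x).le (D.F_nonneg (a + h))]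
  have hlim : Tendsto (fun a => D.F (x + h) * D.f x + D.F a * D.f (x + h)) atBot
      (𝓝 (D.F (x + h) * D.f x)) := by
    simpa using (D.tendsto_bot.mul_const (D.f (x + h))).const_add (D.F (x + h) * D.f x)
  exact ge_of_tendsto hlim (eventually_atBot.2 ⟨x, hcut⟩)

theorem monotone_F_div_f : Monotone fun x => D.F x / D.f x := by
  intro x y hxy
  obtain ⟨h, hh, rfl⟩ : ∃ h, 0 ≤ h ∧ y = x + h := ⟨y - x, sub_nonneg.2 hxy, by ring⟩
  exact (div_le_div_iff₀ (D.f_pos x) (D.f_pos _)).2 (D.F_mul_f_le x hh)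

theorem strictUnimodal_sub_mul_F (t : ℝ) : StrictUnimodal fun x => (t - x) * D.F x := by
  set q : ℝ → ℝ := fun x => t - x - D.F x / D.f x
  have hq_anti : StrictAnti q := fun x y hxy => by
    have := D.monotone_F_div_f hxy.le
    simp only [q]
    linarith
  have hq_cont : Continuous q := (continuous_const.sub continuous_id).sub
    (D.continuous_F.div D.f_diff.continuous fun x => (D.f_pos x).ne')
  have hratio : 0 ≤ D.F t / D.f t := div_nonneg (D.F_nonneg t) (D.f_pos t).le
  set a := t - D.F t / D.f t - 1
  have hat : a ≤ t := by linarith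
  have hqa : 0 ≤ q a := by
    have := D.monotone_F_div_f hat
    simp only [q, a] at this ⊢
    linarith
  have hqt : q t ≤ 0 := by simp only [q]; linarith
  obtain ⟨x₀, -, hx₀⟩ := intermediate_value_Icc' hat hq_cont.continuousOn ⟨hqt, hqa⟩
  refine StrictUnimodal.of_hasDerivAt (G' := fun x => D.f x * q x) (x₀ := x₀) (fun x => ?_)
    (fun x hx => mul_pos (D.f_pos x) (hx₀ ▸ hq_anti hx))
    (fun x hx => mul_neg_of_pos_of_neg (D.f_pos x) (hx₀ ▸ hq_anti hx))
  have hG : HasDerivAt (fun x => (t - x) * D.F x) (-1 * D.F x + (t - x) * D.f x) x :=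
    ((hasDerivAt_id' x).const_sub t).mul (D.deriv_eq x)
  refine hG.congr_deriv ?_
  simp only [q]
  field_simp [(D.f_pos x).ne']
  ring

def neg : CostDist where
  F x := 1 - D.F (-x)
  f x := D.f (-x)
  deriv_eq x := by
    simpa using ((D.deriv_eq (-x)).comp x (hasDerivAt_neg x)).const_sub 1
  f_pos x := D.f_pos (-x)
  f_diff := D.f_diff.comp differentiable_neg
  f_logConcave := D.f_logConcave.comp_linearMap (-LinearMap.id)
  tendsto_bot := by
    simpa using (D.tendsto_top.comp tendsto_neg_atBot_atTop).const_sub 1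
  tendsto_top := by
    simpa using (D.tendsto_bot.comp tendsto_neg_atTop_atBot).const_sub 1

theorem strictUnimodal_EU0 {phi t d1 d0 : ℝ} (hρ : rho d1 d0 phi ≠ 0) :
    StrictUnimodal (EU0 D phi t d1 d0) := by
  convert (D.strictUnimodal_sub_mul_F t).comp_mul_right hρ using 1
  funext r
  simp only [EU0]
  ring

theorem strictUnimodal_EU1 {phi t gamma d1 d0 : ℝ} (hρ : rho d1 d0 phi ≠ 0) :
    StrictUnimodal (EU1 D phi t gamma d1 d0) := by
  convert ((D.neg.strictUnimodal_sub_mul_F (-t)).add_const (t - gamma)).comp_mul_right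
    (neg_ne_zero.2 hρ) using 1
  funext r
  simp only [EU1, neg, mul_neg, neg_neg]
  ring

end CostDist

theorem prop5_general (D : CostDist) (phi t gamma d1 d0 : ℝ) :
    (rho d1 d0 phi ≠ 0 →
      StrictQuasiconcaveOn Set.univ (EU1 D phi t gamma d1 d0) ∧
      StrictQuasiconcaveOn Set.univ (EU0 D phi t d1 d0) ∧
      (∃! r : ℝ, ∀ r' : ℝ, EU1 D phi t gamma d1 d0 r' ≤ EU1 D phi t gamma d1 d0 r) ∧
      (∃! r : ℝ, ∀ r' : ℝ, EU0 D phi t d1 d0 r' ≤ EU0 D phi t d1 d0 r)) ∧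
    (rho d1 d0 phi = 0 →
      (∀ r r' : ℝ, EU1 D phi t gamma d1 d0 r = EU1 D phi t gamma d1 d0 r') ∧
      (∀ r r' : ℝ, EU0 D phi t d1 d0 r = EU0 D phi t d1 d0 r')) := by
  refine ⟨fun hρ => ?_, fun hρ => by simp [EU1, EU0, hρ]⟩
  have h₁ := D.strictUnimodal_EU1 (t := t) (gamma := gamma) hρ
  have h₀ := D.strictUnimodal_EU0 (t := t) hρ
  exact ⟨h₁.strictQuasiconcaveOn, h₀.strictQuasiconcaveOn, h₁.existsUnique_forall_le,
    h₀.existsUnique_forall_le⟩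

/-- **Proposition 5.** For a non-null classifier, each of the voter's conditional payoffs
`EU₁(· | γ)` and `EU₀` is strictly quasiconcave in `r` and has a unique (finite) global
maximizer; for a null classifier both are constant in `r`. -/
theorem prop5 (D : CostDist) (phi t gamma d1 d0 : ℝ)
    (hphi : phi ∈ Set.Ioc (1 / 2 : ℝ) 1) (ht : 0 ≤ t)
    (hd1 : d1 ∈ Set.Icc (0 : ℝ) 1) (hd0 : d0 ∈ Set.Icc (0 : ℝ) 1) :
    (rho d1 d0 phi ≠ 0 →
      StrictQuasiconcaveOn Set.univ (EU1 D phi t gamma d1 d0) ∧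
      StrictQuasiconcaveOn Set.univ (EU0 D phi t d1 d0) ∧
      (∃! r : ℝ, ∀ r' : ℝ, EU1 D phi t gamma d1 d0 r' ≤ EU1 D phi t gamma d1 d0 r) ∧
      (∃! r : ℝ, ∀ r' : ℝ, EU0 D phi t d1 d0 r' ≤ EU0 D phi t d1 d0 r)) ∧
    (rho d1 d0 phi = 0 →
      (∀ r r' : ℝ, EU1 D phi t gamma d1 d0 r = EU1 D phi t gamma d1 d0 r') ∧
      (∀ r r' : ℝ, EU0 D phi t d1 d0 r = EU0 D phi t d1 d0 r')) :=
  prop5_general D phi t gamma d1 d0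
end

section
/- (Proposition 8.) Fix k ∈ ℝ, a cost γ, and taste t ≥ 0. For every classifier δ with ρ(δ,φ) ≠ 0, the voter's payoff at the democratic reward r = k/ρ(δ,φ) equals max(−γ + k·(1 − F(k)) + t·F(k), t·F(k) − k·F(k)), which does not depend on δ; hence every voter is indifferent between all non-null classifiers when rewards are chosen democratically. Moreover, for every null classifier (ρ(δ,φ) = 0) and every reward r ∈ ℝ, the voter's payoff is V(r | γ) = t·F(0) − min(γ, 0), which does not depend on δ or r. -/
open MeasureTheory

/-- **Proposition 8.** At the democratic reward `r = k/ρ(δ,φ)`, a voter's payoff equals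
`max(−γ + k(1−F(k)) + tF(k), tF(k) − kF(k))`, independent of the (non-null) classifier;
and for any null classifier and any reward, the voter's payoff is `tF(0) − min(γ,0)`. -/
theorem prop8 (D : CostDist) (k gamma t : ℝ) (ht : 0 ≤ t) :
    (∀ phi ∈ Set.Ioc (1 / 2 : ℝ) 1, ∀ d1 ∈ Set.Icc (0 : ℝ) 1, ∀ d0 ∈ Set.Icc (0 : ℝ) 1,
      rho d1 d0 phi ≠ 0 →
        V D phi t gamma d1 d0 (k / rho d1 d0 phi) =
          max (-gamma + k * (1 - D.F k) + t * D.F k) (t * D.F k - k * D.F k)) ∧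
    (∀ phi ∈ Set.Ioc (1 / 2 : ℝ) 1, ∀ d1 ∈ Set.Icc (0 : ℝ) 1, ∀ d0 ∈ Set.Icc (0 : ℝ) 1,
      rho d1 d0 phi = 0 → ∀ r : ℝ,
        V D phi t gamma d1 d0 r = t * D.F 0 - min gamma 0) := by
  constructor
  · intro phi _ d1 _ d0 _ hρ
    have h : k / rho d1 d0 phi * rho d1 d0 phi = k := div_mul_cancel₀ k hρ
    simp only [V, EU1, EU0, h]
    ring_nf
  · intro phi _ d1 _ d0 _ hρ r
    simp only [V, EU1, EU0, hρ, mul_zero, zero_mul, neg_zero, zero_add, sub_zero,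
      zero_sub, add_zero, one_mul]
    rcases le_total gamma 0 with h | h
    · rw [min_eq_left h, max_eq_left (by linarith)]; ring
    · rw [min_eq_right h, max_eq_right (by linarith)]; ring
end

section
/- (Corollary 3.) Suppose φ < 1, A₁ > A₀, B₁ > B₀, and k_μ*(t) ≠ 0. Then the interval endpoints a = (B₁−B₀)(1−φ) / ((B₁−B₀)(1−φ) + (A₁−A₀)φ) and b = (B₁−B₀)φ / ((A₁−A₀)(1−φ) + (B₁−B₀)φ) satisfy 0 < a ≤ b < 1, and a null equilibrium exists whenever F(0) ≤ a or F(0) ≥ b; in particular, a null equilibrium exists whenever the sincere prevalence F(0) is sufficiently low or sufficiently high. -/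
open MeasureTheory

/-- **Corollary 3.** If `φ < 1`, `A₁ > A₀`, `B₁ > B₀`, and `k_μ*(t) ≠ 0`, then the
interval endpoints satisfy `0 < a ≤ b < 1`, and a null equilibrium exists whenever
`F(0) ≤ a` or `F(0) ≥ b` — in particular when sincere prevalence is sufficiently low
or sufficiently high. -/
theorem cor3 (D : CostDist) (phi t A1 A0 B1 B0 : ℝ)
    (hphi : phi ∈ Set.Ioc (1 / 2 : ℝ) 1) (hphi1 : phi < 1) (ht : 0 ≤ t)
    (hA0 : 0 ≤ A0) (hB0 : 0 ≤ B0)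
    (hA : A0 < A1) (hB : B0 < B1)
    (k1v k0v Theta gammaMu kMu : ℝ)
    (hk1 : k1v = t + (1 - D.F k1v) / D.f k1v)
    (hk0 : k0v = t - D.F k0v / D.f k0v)
    (hTheta : Theta = k0v * D.F k0v + k1v * (1 - D.F k1v) + t * (D.F k1v - D.F k0v))
    (hmed : D.F gammaMu = 1 / 2)
    (hkMu1 : gammaMu ≤ Theta → kMu = k1v)
    (hkMu0 : Theta < gammaMu → kMu = k0v)
    (hkMu : kMu ≠ 0) :
    0 < (B1 - B0) * (1 - phi) / ((B1 - B0) * (1 - phi) + (A1 - A0) * phi) ∧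
    (B1 - B0) * (1 - phi) / ((B1 - B0) * (1 - phi) + (A1 - A0) * phi) ≤
      (B1 - B0) * phi / ((A1 - A0) * (1 - phi) + (B1 - B0) * phi) ∧
    (B1 - B0) * phi / ((A1 - A0) * (1 - phi) + (B1 - B0) * phi) < 1 ∧
    ((D.F 0 ≤ (B1 - B0) * (1 - phi) / ((B1 - B0) * (1 - phi) + (A1 - A0) * phi) ∨
      (B1 - B0) * phi / ((A1 - A0) * (1 - phi) + (B1 - B0) * phi) ≤ D.F 0) →
      ∃ r d1 d0 : ℝ, IsEquilibrium D phi t A1 A0 B1 B0 gammaMu r d1 d0 ∧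
        (rho d1 d0 phi = 0 ∨ r = 0)) := by
  obtain ⟨hphi_half, _⟩ := hphi
  have hdA : 0 < A1 - A0 := sub_pos.2 hA
  have hdB : 0 < B1 - B0 := sub_pos.2 hB
  have h1p : 0 < 1 - phi := by linarith
  have hphi0 : 0 < phi := by linarith
  have hden1 : 0 < (B1 - B0) * (1 - phi) + (A1 - A0) * phi := by positivity
  have hden2 : 0 < (A1 - A0) * (1 - phi) + (B1 - B0) * phi := by positivity
  have ha : 0 < (B1 - B0) * (1 - phi) / ((B1 - B0) * (1 - phi) + (A1 - A0) * phi) :=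
    div_pos (by positivity) hden1
  have hab : (B1 - B0) * (1 - phi) / ((B1 - B0) * (1 - phi) + (A1 - A0) * phi) ≤
      (B1 - B0) * phi / ((A1 - A0) * (1 - phi) + (B1 - B0) * phi) := by
    rw [div_le_div_iff₀ hden1 hden2]
    nlinarith [mul_pos hdA hdB, mul_pos (mul_pos hdA hdB) (by linarith : (0:ℝ) < 2 * phi - 1)]
  have hb1 : (B1 - B0) * phi / ((A1 - A0) * (1 - phi) + (B1 - B0) * phi) < 1 := by
    rw [div_lt_one hden2]
    nlinarith [mul_pos hdA h1p]
  refine ⟨ha, hab, hb1, ?_⟩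
  intro hcase
  -- bounds on F 0
  have hmono : Monotone D.F := by
    have : StrictMono D.F :=
      strictMono_of_deriv_pos (fun x => by rw [(D.deriv_eq x).deriv]; exact D.f_pos x)
    exact this.monotone
  have hF0l : 0 ≤ D.F 0 :=
    le_of_tendsto D.tendsto_bot (Filter.eventually_atBot.2 ⟨0, fun x hx => hmono hx⟩)
  have hF0u : D.F 0 ≤ 1 :=
    ge_of_tendsto D.tendsto_top (Filter.eventually_atTop.2 ⟨0, fun x hx => hmono hx⟩)
  set F0 := D.F 0 with hF0
  rcases hcase with hc | hc
  · -- low prevalence: δ* = (0, 1)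
    refine ⟨0, 0, 1, ⟨⟨le_refl 0, zero_le_one⟩, ⟨zero_le_one, le_refl 1⟩, ?_, ?_⟩, Or.inr rfl⟩
    · intro r'
      have hr : rho 0 1 phi = 0 := by simp [rho]
      simp [V, EU1, EU0, hr]
    · intro e1 he1 e0 he0
      have key : F0 * ((B1 - B0) * (1 - phi) + (A1 - A0) * phi) ≤ (B1 - B0) * (1 - phi) :=
        (le_div_iff₀ hden1).mp hc
      have hc1 : F0 * phi * (A1 - A0) ≤ (1 - F0) * (1 - phi) * (B1 - B0) := by linarith [key]
      have p1 : 0 ≤ F0 * (A1 - A0) * (2 * phi - 1) :=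
        mul_nonneg (mul_nonneg hF0l hdA.le) (by linarith)
      have p2 : 0 ≤ (1 - F0) * (B1 - B0) * (2 * phi - 1) :=
        mul_nonneg (mul_nonneg (by linarith) hdB.le) (by linarith)
      have hc0 : F0 * (1 - phi) * (A1 - A0) ≤ (1 - F0) * phi * (B1 - B0) := by
        linarith [hc1, p1, p2]
      have h1 := mul_nonneg he1.1
        (by linarith : (0:ℝ) ≤ (1 - F0) * (1 - phi) * (B1 - B0) - F0 * phi * (A1 - A0))
      have h2 := mul_nonneg (by linarith [he0.2] : (0:ℝ) ≤ 1 - e0)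
        (by linarith : (0:ℝ) ≤ (1 - F0) * phi * (B1 - B0) - F0 * (1 - phi) * (A1 - A0))
      simp only [EUD, zero_mul, ← hF0]
      linarith [h1, h2]
  · -- high prevalence: δ* = (1, 0)
    refine ⟨0, 1, 0, ⟨⟨zero_le_one, le_refl 1⟩, ⟨le_refl 0, zero_le_one⟩, ?_, ?_⟩, Or.inr rfl⟩
    · intro r'
      have hr : rho 1 0 phi = 0 := by simp [rho]
      simp [V, EU1, EU0, hr]
    · intro e1 he1 e0 he0
      have key : (B1 - B0) * phi ≤ F0 * ((A1 - A0) * (1 - phi) + (B1 - B0) * phi) :=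
        (div_le_iff₀ hden2).mp hc
      have hc0 : (1 - F0) * phi * (B1 - B0) ≤ F0 * (1 - phi) * (A1 - A0) := by linarith [key]
      have p1 : 0 ≤ F0 * (A1 - A0) * (2 * phi - 1) :=
        mul_nonneg (mul_nonneg hF0l hdA.le) (by linarith)
      have p2 : 0 ≤ (1 - F0) * (B1 - B0) * (2 * phi - 1) :=
        mul_nonneg (mul_nonneg (by linarith) hdB.le) (by linarith)
      have hc1 : (1 - F0) * (1 - phi) * (B1 - B0) ≤ F0 * phi * (A1 - A0) := by
        linarith [hc0, p1, p2]
      have h1 := mul_nonneg (by linarith [he1.2] : (0:ℝ) ≤ 1 - e1)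
        (by linarith : (0:ℝ) ≤ F0 * phi * (A1 - A0) - (1 - F0) * (1 - phi) * (B1 - B0))
      have h2 := mul_nonneg he0.1
        (by linarith : (0:ℝ) ≤ F0 * (1 - phi) * (A1 - A0) - (1 - F0) * phi * (B1 - B0))
      simp only [EUD, zero_mul, ← hF0]
      linarith [h1, h2]
end

section
/- (Proposition 13.) Assume additionally that the cost distribution has a finite first moment, i.e. γ ↦ γ·f(γ) is integrable on ℝ. Fix a precision φ ∈ (1/2, 1] and a classifier δ with ρ(δ,φ) ≠ 0, and define social welfare SW(r) = t·F(r·ρ(δ,φ)) − ∫_{−∞}^{r·ρ(δ,φ)} γ·f(γ) dγ. Then SW attains its unique global maximum over r ∈ ℝ at r_SW* = t / ρ(δ,φ). -/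
open MeasureTheory

lemma prop13_aux (D : CostDist) (t : ℝ)
    (hint : MeasureTheory.Integrable (fun gamma : ℝ => gamma * D.f gamma))
    (x : ℝ) (hx : x ≠ t) :
    t * D.F x - (∫ gamma in Set.Iic x, gamma * D.f gamma) <
      t * D.F t - (∫ gamma in Set.Iic t, gamma * D.f gamma) := by
  have hfc : Continuous D.f := D.f_diff.continuous
  have hFsub : ∀ a b : ℝ, D.F b - D.F a = ∫ y in a..b, D.f y := by
    intro a b
    refine (intervalIntegral.integral_eq_sub_of_hasDerivAt (fun y _ => D.deriv_eq y) ?_).symm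
    exact hfc.intervalIntegrable a b
  have hIsub : ∀ a b : ℝ,
      (∫ y in Set.Iic b, y * D.f y) - (∫ y in Set.Iic a, y * D.f y)
        = ∫ y in a..b, y * D.f y := by
    intro a b
    exact intervalIntegral.integral_Iic_sub_Iic hint.integrableOn hint.integrableOn
  have key : (t * D.F t - (∫ y in Set.Iic t, y * D.f y))
      - (t * D.F x - (∫ y in Set.Iic x, y * D.f y))
      = ∫ y in x..t, (t - y) * D.f y := by
    have h1 : t * D.F t - t * D.F x = ∫ y in x..t, t * D.f y := by
      rw [← mul_sub, hFsub x t, ← intervalIntegral.integral_const_mul]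
    have h2 := hIsub x t
    have h3 : (∫ y in x..t, t * D.f y) - (∫ y in x..t, y * D.f y)
        = ∫ y in x..t, (t - y) * D.f y := by
      rw [← intervalIntegral.integral_sub ((Continuous.intervalIntegrable (by fun_prop) x t)) ((Continuous.intervalIntegrable (by fun_prop) x t))]
      congr 1; ext y; ring
    linarith
  have hpos : 0 < ∫ y in x..t, (t - y) * D.f y := by
    rcases lt_or_gt_of_ne hx with h | h
    · apply intervalIntegral.intervalIntegral_pos_of_pos_on
        ((Continuous.intervalIntegrable (by fun_prop : Continuous fun y => (t - y) * D.f y) x t))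
      · intro y hy
        exact mul_pos (by linarith [hy.2]) (D.f_pos y)
      · exact h
    · rw [intervalIntegral.integral_symm]
      rw [← intervalIntegral.integral_neg]
      apply intervalIntegral.intervalIntegral_pos_of_pos_on
        ((Continuous.intervalIntegrable (by fun_prop : Continuous fun y => -((t - y) * D.f y)) t x))
      · intro y hy
        have := D.f_pos y
        nlinarith [hy.1]
      · exact h
  linarith

/-- **Proposition 13.** If the cost distribution has a finite first moment, then for any
non-null classifier the social welfare
`SW(r) = t·F(r·ρ) − ∫_{−∞}^{r·ρ} γ f(γ) dγ` attains its unique global maximum at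
`r_SW* = t/ρ(δ,φ)`. -/
theorem prop13 (D : CostDist) (phi t d1 d0 : ℝ)
    (hphi : phi ∈ Set.Ioc (1 / 2 : ℝ) 1) (ht : 0 ≤ t)
    (hd1 : d1 ∈ Set.Icc (0 : ℝ) 1) (hd0 : d0 ∈ Set.Icc (0 : ℝ) 1)
    (hrho : rho d1 d0 phi ≠ 0)
    (hint : MeasureTheory.Integrable (fun gamma : ℝ => gamma * D.f gamma)) :
    ∀ r : ℝ, r ≠ t / rho d1 d0 phi →
      t * D.F (r * rho d1 d0 phi) -
          (∫ gamma in Set.Iic (r * rho d1 d0 phi), gamma * D.f gamma) <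
        t * D.F (t / rho d1 d0 phi * rho d1 d0 phi) -
          (∫ gamma in Set.Iic (t / rho d1 d0 phi * rho d1 d0 phi), gamma * D.f gamma) := by
  intro r hr
  have hcancel : t / rho d1 d0 phi * rho d1 d0 phi = t := div_mul_cancel₀ t hrho
  rw [hcancel]
  apply prop13_aux D t hint
  intro h
  exact hr ((eq_div_iff hrho).mpr h)
end
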